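/- arXiv:2510.26426 — 5 statements merged into one kernel-verified Lean document; each statement's English description precedes it below -/
import Mathlib

section
/- Let D be an n-vertex Eulerian digraph (a loopless digraph without multiple arcs that is strongly connected and in which every vertex has out-degree equal to its in-degree) with average out-degree d. Then for every vertex v of D there exists a directed path of length at least √(2d) − 3/2 starting at v. -/
/-- `l` is a directed path of the digraph with arc relation `A`:
its vertices are pairwise distinct and consecutive vertices are joined by arcs.
The length of the path (its number of arcs) is `l.length - 1`. -/
def IsDirPath {V : Type*} (A : V → V → Prop) (l : List V) : Prop :=
  l.Nodup ∧ l.Chain' A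

set_option linter.unusedSectionVars false

section Aux
variable {V : Type*} [Fintype V] {A : V → V → Prop}

open Classical in
/-- Length (number of arcs) of a longest directed path starting at `u`. -/
noncomputable def mxLen (A : V → V → Prop) [Fintype V] (u : V) : ℕ :=
  Nat.findGreatest
    (fun m => ∃ l : List V, IsDirPath A l ∧ l.head? = some u ∧ l.length = m + 1)
    (Fintype.card V)

lemma isDirPath_singleton (u : V) : IsDirPath A [u] :=
  ⟨List.nodup_singleton u, List.isChain_singleton u⟩

open Classical in
lemma exists_mxLen_path (u : V) :
    ∃ l : List V, IsDirPath A l ∧ l.head? = some u ∧ l.length = mxLen A u + 1 := by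
  have h0 : ∃ l : List V, IsDirPath A l ∧ l.head? = some u ∧ l.length = 0 + 1 :=
    ⟨[u], isDirPath_singleton u, rfl, rfl⟩
  exact Nat.findGreatest_spec
    (P := fun m => ∃ l : List V, IsDirPath A l ∧ l.head? = some u ∧ l.length = m + 1)
    (Nat.zero_le _) h0

open Classical in
lemma length_le_mxLen {l : List V} {u : V} (hl : IsDirPath A l) (hh : l.head? = some u) :
    l.length ≤ mxLen A u + 1 := by
  have hne : l ≠ [] := by rintro rfl; simp at hh
  have hlen : 1 ≤ l.length := List.length_pos_iff.2 hne
  have hP : ∃ l' : List V, IsDirPath A l' ∧ l'.head? = some u ∧ l'.length = (l.length - 1) + 1 :=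
    ⟨l, hl, hh, by omega⟩
  have hb : l.length - 1 ≤ Fintype.card V := by
    have := hl.1.length_le_card
    omega
  have := Nat.le_findGreatest
    (P := fun m => ∃ l' : List V, IsDirPath A l' ∧ l'.head? = some u ∧ l'.length = m + 1)
    hb hP
  unfold mxLen
  omega

lemma isDirPath_cons {u : V} {l : List V} (hl : IsDirPath A l)
    (hu : u ∉ l) (harc : ∀ y ∈ l.head?, A u y) : IsDirPath A (u :: l) :=
  ⟨List.nodup_cons.2 ⟨hu, hl.1⟩, List.isChain_cons.2 ⟨harc, hl.2⟩⟩

lemma isDirPath_drop {l : List V} (hl : IsDirPath A l) (i : ℕ) : IsDirPath A (l.drop i) :=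
  ⟨hl.1.sublist (List.drop_sublist i l), hl.2.drop i⟩

lemma isDirPath_take {l : List V} (hl : IsDirPath A l) (i : ℕ) : IsDirPath A (l.take i) :=
  ⟨hl.1.sublist (List.take_sublist i l), hl.2.take i⟩

end Aux

section Aux2
variable {V : Type*} [Fintype V] {A : V → V → Prop}

lemma isDirPath_rotate [DecidableEq V] {c : List V} (hc : IsDirPath A c)
    (harc : ∀ x ∈ c.getLast?, ∀ y ∈ c.head?, A x y) {x : V} (hx : x ∈ c) :
    IsDirPath A (c.drop (c.idxOf x) ++ c.take (c.idxOf x)) ∧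
      ((c.drop (c.idxOf x) ++ c.take (c.idxOf x)).head? = some x) ∧
      (c.drop (c.idxOf x) ++ c.take (c.idxOf x)).length = c.length := by
  set i := c.idxOf x with hidef
  have hi : i < c.length := List.idxOf_lt_length_iff.2 hx
  have hdne : c.drop i ≠ [] := by
    apply List.ne_nil_of_length_pos
    rw [List.length_drop]
    omega
  have hperm : (c.drop i ++ c.take i).Perm c :=
    (List.perm_append_comm).trans (by rw [List.take_append_drop])
  have hnodup : (c.drop i ++ c.take i).Nodup := hperm.symm.nodup hc.1
  have hchain : (c.drop i ++ c.take i).Chain' A := by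
    rcases Nat.eq_zero_or_pos i with h0 | hipos
    · simp only [h0, List.drop_zero, List.take_zero, List.append_nil]
      exact hc.2
    · refine List.isChain_append.2 ⟨hc.2.drop i, hc.2.take i, ?_⟩
      intro x hx y hy
      have hgl : (c.drop i).getLast? = c.getLast? := by
        conv_rhs => rw [← List.take_append_drop i c]
        rw [List.getLast?_append_of_ne_nil _ hdne]
      have hhd : (c.take i).head? = c.head? := by
        rcases c with _ | ⟨a, t⟩
        · simp at hi
        · obtain ⟨j, hj⟩ := Nat.exists_eq_add_of_lt hipos
          rw [hj]
          simp [List.take_succ_cons]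
      exact harc x (by rwa [hgl] at hx) y (by rwa [hhd] at hy)
  refine ⟨⟨hnodup, hchain⟩, ?_, ?_⟩
  · rw [List.head?_append_of_ne_nil _ hdne, List.head?_drop]
    exact List.getElem?_idxOf hx
  · rw [List.length_append, List.length_drop, List.length_take]
    omega

lemma clean_reach (c : List V) (l : List V) (v : V) (hch : List.Chain A v l)
    (hlast : (v :: l).getLast (List.cons_ne_nil _ _) ∈ c) :
    ∃ r : List V, IsDirPath A r ∧ r.head? = some v ∧
      ∃ x, x ∈ c ∧ r.getLast? = some x ∧ ∀ y ∈ r, y ∈ c → y = x := by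
  induction l generalizing v with
  | nil =>
    refine ⟨[v], isDirPath_singleton v, rfl, v, by simpa using hlast, rfl, by simp⟩
  | cons w l' ih =>
    by_cases hv : v ∈ c
    · exact ⟨[v], isDirPath_singleton v, rfl, v, hv, rfl, by simp⟩
    · have hA : A v w := (List.chain_cons.1 hch).1
      have hch' : List.Chain A w l' := (List.chain_cons.1 hch).2
      have hlast' : (w :: l').getLast (List.cons_ne_nil _ _) ∈ c := by
        rwa [List.getLast_cons_cons] at hlast
      obtain ⟨r', hr', hh', x, hxc, hlx, hcl⟩ := ih w hch' hlast'
      classical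
      by_cases hvr : v ∈ r'
      · set i := r'.idxOf v with hidef
        have hi : i < r'.length := List.idxOf_lt_length_iff.2 hvr
        have hdne : r'.drop i ≠ [] := by
          apply List.ne_nil_of_length_pos; rw [List.length_drop]; omega
        refine ⟨r'.drop i, isDirPath_drop hr' i, ?_, x, hxc, ?_, ?_⟩
        · rw [List.head?_drop]
          exact List.getElem?_idxOf hvr
        · conv_rhs => rw [← hlx]
          conv_rhs => rw [← List.take_append_drop i r']
          rw [List.getLast?_append_of_ne_nil _ hdne]
        · intro y hy hyc
          exact hcl y ((List.drop_sublist i r').subset hy) hyc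
      · have hrne : r' ≠ [] := by rintro rfl; simp at hh'
        refine ⟨v :: r', isDirPath_cons hr' hvr ?_, rfl, x, hxc, ?_, ?_⟩
        · intro y hy
          rw [hh'] at hy
          have hyw : w = y := by simpa using hy
          rwa [← hyw]
        · show ([v] ++ r').getLast? = some x
          rw [List.getLast?_append_of_ne_nil _ hrne, hlx]
        · intro y hy hyc
          rcases List.mem_cons.1 hy with rfl | hy'
          · exact absurd hyc hv
          · exact hcl y hy' hyc

lemma cycle_length_le {v : V} (hstrong : ∀ a b : V, Relation.ReflTransGen A a b)
    {c : List V} (hc : IsDirPath A c) (hne : c ≠ [])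
    (harc : ∀ x ∈ c.getLast?, ∀ y ∈ c.head?, A x y) :
    c.length ≤ mxLen A v + 1 := by
  classical
  by_cases hvc : v ∈ c
  · obtain ⟨hpath, hhead, hlen⟩ := isDirPath_rotate hc harc hvc
    have := length_le_mxLen hpath hhead
    omega
  · have ht : c.head hne ∈ c := List.head_mem hne
    obtain ⟨l, hch, hlast⟩ := List.exists_isChain_cons_of_relationReflTransGen (hstrong v (c.head hne))
    obtain ⟨r, hr, hrh, x, hxc, hrx, hclean⟩ := clean_reach c l v hch (by rw [hlast]; exact ht)
    obtain ⟨hrot, hrothx, hrotlen⟩ := isDirPath_rotate hc harc hxc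
    set rot := c.drop (c.idxOf x) ++ c.take (c.idxOf x) with hrotdef
    -- rot = x :: rot.tail
    obtain ⟨rt, hrteq⟩ : ∃ rt, rot = x :: rt := by
      rcases rot with _ | ⟨a, t⟩
      · simp at hrothx
      · have hax : a = x := by simpa using hrothx
        exact ⟨t, by rw [hax]⟩
    have hrne : r ≠ [] := by rintro rfl; simp at hrh
    have hvnex : v ≠ x := fun h => hvc (h ▸ hxc)
    have hrlen2 : 2 ≤ r.length := by
      rcases r with _ | ⟨a, t⟩
      · simp at hrh
      · rcases t with _ | ⟨b, t'⟩
        · exfalso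
          have h1 : a = v := by simpa using hrh
          have h2 : a = x := by simpa using hrx
          exact hvnex (h1.symm.trans h2)
        · rw [List.length_cons, List.length_cons]; omega
    have hxnotrt : x ∉ rt := by
      have := hrot.1
      rw [hrteq] at this
      exact (List.nodup_cons.1 this).1
    have hdisj : r.Disjoint rt := by
      intro y hyr hyrt
      have hyrot : y ∈ rot := by rw [hrteq]; exact List.mem_cons_of_mem _ hyrt
      have hyc : y ∈ c := by
        have hperm : rot.Perm c := (List.perm_append_comm).trans (by rw [List.take_append_drop])
        exact (hperm.mem_iff).1 hyrot
      have := hclean y hyr hyc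
      exact hxnotrt (this ▸ hyrt)
    have htotal : IsDirPath A (r ++ rt) := by
      constructor
      · refine hr.1.append ?_ hdisj
        have : rt.Sublist rot := hrteq ▸ List.sublist_cons_self x rt
        exact hrot.1.sublist this
      · refine List.isChain_append.2 ⟨hr.2, ?_, ?_⟩
        · have := hrot.2
          rw [hrteq] at this
          exact (List.isChain_cons.1 this).2
        · intro a ha b hb
          rw [hrx] at ha
          have hxa : x = a := by simpa using ha
          have hch2 := hrot.2
          rw [hrteq] at hch2
          exact hxa ▸ (List.isChain_cons.1 hch2).1 b hb
    have hth : (r ++ rt).head? = some v := by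
      rw [List.head?_append_of_ne_nil _ hrne, hrh]
    have hlen := length_le_mxLen htotal hth
    have hrtlen : rt.length + 1 = c.length := by
      have := hrotlen
      rw [hrteq] at this
      simpa using this
    rw [List.length_append] at hlen
    omega

end Aux2

section Aux3
variable {V : Type*} [Fintype V] {A : V → V → Prop}

lemma bad_arc_facts [DecidableEq V] {v u w : V}
    (hstrong : ∀ a b : V, Relation.ReflTransGen A a b)
    (hloopless : ∀ a : V, ¬ A a a)
    (hA : A u w) (hle : mxLen A u ≤ mxLen A w)
    {Q : List V} (hQ : IsDirPath A Q) (hh : Q.head? = some w)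
    (hlen : Q.length = mxLen A w + 1) :
    u ∈ Q ∧ 1 ≤ Q.idxOf u ∧ Q.idxOf u ≤ mxLen A v ∧
      mxLen A w ≤ mxLen A u + Q.idxOf u := by
  have hmem : u ∈ Q := by
    by_contra hu
    have hcons : IsDirPath A (u :: Q) := by
      refine isDirPath_cons hQ hu ?_
      intro y hy
      rw [hh] at hy
      have : w = y := by simpa using hy
      rwa [← this]
    have hb := length_le_mxLen hcons rfl
    rw [List.length_cons, hlen] at hb
    omega
  set p := Q.idxOf u with hpdef
  have hp : p < Q.length := List.idxOf_lt_length_iff.2 hmem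
  have hgp : Q[p]? = some u := List.getElem?_idxOf hmem
  have hp1 : 1 ≤ p := by
    rcases Nat.eq_zero_or_pos p with h0 | h
    · exfalso
      rw [h0] at hgp
      rw [← List.head?_eq_getElem? (l := Q), hh] at hgp
      have : w = u := by simpa using hgp
      exact hloopless u (this ▸ hA)
    · exact h
  have hdroplen : mxLen A w ≤ mxLen A u + p := by
    have hpath := isDirPath_drop hQ p
    have hhd : (Q.drop p).head? = some u := by rw [List.head?_drop]; exact hgp
    have := length_le_mxLen hpath hhd
    rw [List.length_drop, hlen] at this
    omega
  have hpk : p ≤ mxLen A v := by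
    set c := Q.take (p + 1) with hcdef
    have hclen : c.length = p + 1 := by
      rw [hcdef, List.length_take]
      omega
    have hcne : c ≠ [] := by
      apply List.ne_nil_of_length_pos
      omega
    have hcl : c.getLast? = some u := by
      rw [hcdef, List.take_succ, hgp]
      rw [List.getLast?_append_of_ne_nil _ (by simp)]
      simp
    have hch : c.head? = some w := by
      rcases Q with _ | ⟨a, t⟩
      · simp at hh
      · have : a = w := by simpa using hh
        rw [hcdef, List.take_succ_cons]
        simpa using this
    have harc : ∀ x ∈ c.getLast?, ∀ y ∈ c.head?, A x y := by
      intro x hx y hy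
      rw [hcl] at hx; rw [hch] at hy
      have hxu : u = x := by simpa using hx
      have hyw : w = y := by simpa using hy
      rw [← hxu, ← hyw]; exact hA
    have h2 : c.length ≤ mxLen A v + 1 :=
      cycle_length_le (v := v) hstrong (isDirPath_take hQ (p+1)) hcne harc
    omega
  exact ⟨hmem, hp1, hpk, hdroplen⟩

end Aux3

/-- In every `n`-vertex Eulerian digraph (loopless, no multiple arcs, strongly connected,
every vertex has out-degree equal to its in-degree) with average out-degree `d`
(i.e. `n * d` arcs), every vertex `v` starts a directed path of length at least
`√(2d) - 3/2`. -/
theorem eulerian_digraph_long_path_from_every_vertex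
    {V : Type*} [Fintype V] [Nonempty V] (A : V → V → Prop)
    (n : ℕ) (d : ℝ)
    (hcard : Fintype.card V = n)
    (hloopless : ∀ v : V, ¬ A v v)
    (hstrong : ∀ u v : V, Relation.ReflTransGen A u v)
    (heulerian : ∀ v : V, {w | A v w}.ncard = {w | A w v}.ncard)
    (havg : (({p : V × V | A p.1 p.2}.ncard : ℝ)) = n * d) :
    ∀ v : V, ∃ l : List V, IsDirPath A l ∧ l.head? = some v ∧
      Real.sqrt (2 * d) - 3 / 2 ≤ (l.length : ℝ) - 1 := by
  classical
  intro v
  obtain ⟨P, hP, hPh, hPlen⟩ := exists_mxLen_path (A := A) v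
  refine ⟨P, hP, hPh, ?_⟩
  set k := mxLen A v with hk
  rw [hPlen]
  -- it suffices to bound √(2d)
  have main : Real.sqrt (2 * d) ≤ (k : ℝ) + 3 / 2 := by
    -- the arc finset and degrees
    set Arcs : Finset (V × V) := Finset.univ.filter (fun p : V × V => A p.1 p.2) with hArcs
    have hbal : ∀ u : V, (Finset.univ.filter (fun w => A u w)).card
        = (Finset.univ.filter (fun w => A w u)).card := by
      intro u
      have h := heulerian u
      rwa [Set.ncard_eq_toFinset_card', Set.ncard_eq_toFinset_card',
        Set.toFinset_setOf, Set.toFinset_setOf] at h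
    have hm : (Arcs.card : ℝ) = n * d := by
      rw [← havg]
      congr 1
      rw [Set.ncard_eq_toFinset_card', Set.toFinset_setOf]
    -- the zero-sum identity
    have h1 : ∑ a ∈ Arcs, (mxLen A a.1 : ℤ)
        = ∑ u : V, ((Finset.univ.filter (fun w => A u w)).card : ℤ) * (mxLen A u : ℤ) := by
      rw [hArcs, Finset.sum_filter, ← Finset.univ_product_univ, Finset.sum_product]
      refine Finset.sum_congr rfl fun u _ => ?_
      show (∑ w : V, if A u w then (mxLen A u : ℤ) else 0) = _
      rw [← Finset.sum_filter, Finset.sum_const, nsmul_eq_mul]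
    have h2 : ∑ a ∈ Arcs, (mxLen A a.2 : ℤ)
        = ∑ u : V, ((Finset.univ.filter (fun w => A w u)).card : ℤ) * (mxLen A u : ℤ) := by
      rw [hArcs, Finset.sum_filter, ← Finset.univ_product_univ, Finset.sum_product,
        Finset.sum_comm]
      refine Finset.sum_congr rfl fun w _ => ?_
      show (∑ u : V, if A u w then (mxLen A w : ℤ) else 0) = _
      rw [← Finset.sum_filter, Finset.sum_const, nsmul_eq_mul]
    have key : ∑ a ∈ Arcs, ((mxLen A a.1 : ℤ) - (mxLen A a.2 : ℤ)) = 0 := by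
      rw [Finset.sum_sub_distrib, h1, h2, sub_eq_zero]
      refine Finset.sum_congr rfl fun u _ => ?_
      rw [hbal u]
    -- split into good and bad arcs
    set bad : Finset (V × V) := Arcs.filter (fun a => mxLen A a.1 ≤ mxLen A a.2) with hbad
    set good : Finset (V × V) := Arcs.filter (fun a => ¬ mxLen A a.1 ≤ mxLen A a.2) with hgood
    set S : ℤ := ∑ a ∈ bad, ((mxLen A a.2 : ℤ) - (mxLen A a.1 : ℤ)) with hS
    have hsplit : ∑ a ∈ bad, ((mxLen A a.1 : ℤ) - (mxLen A a.2 : ℤ))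
        + ∑ a ∈ good, ((mxLen A a.1 : ℤ) - (mxLen A a.2 : ℤ)) = 0 := by
      rw [hbad, hgood, Finset.sum_filter_add_sum_filter_not, key]
    have hbadS : ∑ a ∈ bad, ((mxLen A a.1 : ℤ) - (mxLen A a.2 : ℤ)) = -S := by
      rw [hS, ← Finset.sum_neg_distrib]
      exact Finset.sum_congr rfl fun a _ => by ring
    have hgoodS : ∑ a ∈ good, ((mxLen A a.1 : ℤ) - (mxLen A a.2 : ℤ)) = S := by
      have := hsplit
      rw [hbadS] at this
      linarith
    have hgoodcard : (good.card : ℤ) ≤ S := by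
      rw [← hgoodS]
      have := Finset.card_nsmul_le_sum good
        (fun a => (mxLen A a.1 : ℤ) - (mxLen A a.2 : ℤ)) 1
        (fun a ha => by
          rw [hgood, Finset.mem_filter] at ha
          have h2 : ¬ mxLen A a.1 ≤ mxLen A a.2 := ha.2
          show (1 : ℤ) ≤ (mxLen A a.1 : ℤ) - (mxLen A a.2 : ℤ)
          omega)
      simpa using this
    -- choose longest paths
    let Q : V → List V := fun w => (exists_mxLen_path (A := A) w).choose
    have hQ : ∀ w, IsDirPath A (Q w) ∧ (Q w).head? = some w
        ∧ (Q w).length = mxLen A w + 1 := fun w => (exists_mxLen_path (A := A) w).choose_spec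
    -- per-target fiber bounds
    have hfacts : ∀ w : V, ∀ a ∈ bad.filter (fun a => a.2 = w),
        a.1 ∈ Q w ∧ 1 ≤ (Q w).idxOf a.1 ∧ (Q w).idxOf a.1 ≤ k ∧
          mxLen A w ≤ mxLen A a.1 + (Q w).idxOf a.1 := by
      intro w a ha
      rw [Finset.mem_filter] at ha
      obtain ⟨hab, ha2⟩ := ha
      rw [hbad, Finset.mem_filter, hArcs, Finset.mem_filter] at hab
      have hA : A a.1 w := ha2 ▸ hab.1.2
      have hle : mxLen A a.1 ≤ mxLen A w := ha2 ▸ hab.2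
      exact bad_arc_facts hstrong hloopless hA hle (hQ w).1 (hQ w).2.1 (hQ w).2.2
    have hinj : ∀ w : V, ∀ a ∈ bad.filter (fun a => a.2 = w),
        ∀ b ∈ bad.filter (fun a => a.2 = w),
        (Q w).idxOf a.1 = (Q w).idxOf b.1 → a = b := by
      intro w a ha b hb hub
      have hma := (hfacts w a ha).1
      have hmb := (hfacts w b hb).1
      have h1 : a.1 = b.1 := (List.idxOf_inj hma).1 hub
      have h2 : a.2 = b.2 := by
        rw [Finset.mem_filter] at ha hb
        rw [ha.2, hb.2]
      exact Prod.ext h1 h2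
    have hfiber_sum : ∀ w : V,
        ∑ a ∈ bad.filter (fun a => a.2 = w), ((mxLen A a.2 : ℤ) - (mxLen A a.1 : ℤ))
          ≤ ∑ i ∈ Finset.Icc 1 k, (i : ℤ) := by
      intro w
      have step1 : ∑ a ∈ bad.filter (fun a => a.2 = w), ((mxLen A a.2 : ℤ) - (mxLen A a.1 : ℤ))
          ≤ ∑ a ∈ bad.filter (fun a => a.2 = w), (((Q w).idxOf a.1 : ℤ)) := by
        refine Finset.sum_le_sum fun a ha => ?_
        obtain ⟨-, -, -, h4⟩ := hfacts w a ha
        have ha2 : a.2 = w := (Finset.mem_filter.1 ha).2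
        rw [ha2]
        have := h4
        push_cast
        omega
      have step2 : ∑ a ∈ bad.filter (fun a => a.2 = w), (((Q w).idxOf a.1 : ℤ))
          = ∑ i ∈ (bad.filter (fun a => a.2 = w)).image (fun a => (Q w).idxOf a.1), (i : ℤ) :=
        (Finset.sum_image (hinj w)).symm
      have step3 : ∑ i ∈ (bad.filter (fun a => a.2 = w)).image (fun a => (Q w).idxOf a.1), (i : ℤ)
          ≤ ∑ i ∈ Finset.Icc 1 k, (i : ℤ) := by
        refine Finset.sum_le_sum_of_subset_of_nonneg ?_ (fun i _ _ => by positivity)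
        intro i hi
        rw [Finset.mem_image] at hi
        obtain ⟨a, ha, rfl⟩ := hi
        obtain ⟨-, h2, h3, -⟩ := hfacts w a ha
        rw [Finset.mem_Icc]
        exact ⟨h2, h3⟩
      calc _ ≤ _ := step1
        _ = _ := step2
        _ ≤ _ := step3
    have hfiber_card : ∀ w : V, (bad.filter (fun a => a.2 = w)).card ≤ k := by
      intro w
      rw [← Finset.card_image_of_injOn (fun a ha b hb h => hinj w a ha b hb h)]
      have hsub : (bad.filter (fun a => a.2 = w)).image (fun a => (Q w).idxOf a.1)
          ⊆ Finset.Icc 1 k := by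
        intro i hi
        rw [Finset.mem_image] at hi
        obtain ⟨a, ha, rfl⟩ := hi
        obtain ⟨-, h2, h3, -⟩ := hfacts w a ha
        rw [Finset.mem_Icc]
        exact ⟨h2, h3⟩
      calc _ ≤ (Finset.Icc 1 k).card := Finset.card_le_card hsub
        _ = k := by rw [Nat.card_Icc]; omega
    -- Gauss sum
    have hgauss : (2 : ℤ) * ∑ i ∈ Finset.Icc 1 k, (i : ℤ) = k * (k + 1) := by
      have hins : Finset.range (k + 1) = insert 0 (Finset.Icc 1 k) := by
        ext i
        simp only [Finset.mem_range, Finset.mem_insert, Finset.mem_Icc]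
        omega
      have hnat : (∑ i ∈ Finset.range (k + 1), i) * 2 = (k + 1) * k :=
        Finset.sum_range_id_mul_two (k + 1)
      have h0 : (0 : ℕ) ∉ Finset.Icc 1 k := by simp
      have : ∑ i ∈ Finset.range (k + 1), i = ∑ i ∈ Finset.Icc 1 k, i := by
        rw [hins, Finset.sum_insert h0, zero_add]
      rw [this] at hnat
      have := congrArg (fun t : ℕ => (t : ℤ)) hnat
      push_cast at this ⊢
      linarith
    -- assemble the bounds
    have hSsum : S = ∑ w : V, ∑ a ∈ bad.filter (fun a => a.2 = w),
        ((mxLen A a.2 : ℤ) - (mxLen A a.1 : ℤ)) := by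
      rw [hS]
      exact (Finset.sum_fiberwise_of_maps_to (fun a _ => Finset.mem_univ a.2) _).symm
    have hSbound : 2 * S ≤ (n : ℤ) * (k * (k + 1)) := by
      rw [hSsum]
      calc 2 * ∑ w : V, ∑ a ∈ bad.filter (fun a => a.2 = w),
            ((mxLen A a.2 : ℤ) - (mxLen A a.1 : ℤ))
          = ∑ w : V, 2 * ∑ a ∈ bad.filter (fun a => a.2 = w),
            ((mxLen A a.2 : ℤ) - (mxLen A a.1 : ℤ)) := by rw [Finset.mul_sum]
        _ ≤ ∑ _w : V, (2 : ℤ) * ∑ i ∈ Finset.Icc 1 k, (i : ℤ) := by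
            refine Finset.sum_le_sum fun w _ => ?_
            have := hfiber_sum w
            linarith
        _ = (n : ℤ) * (k * (k + 1)) := by
            rw [Finset.sum_const, hgauss, Finset.card_univ, hcard, nsmul_eq_mul]
    have hbadcard : (bad.card : ℤ) ≤ (n : ℤ) * k := by
      have hcount : bad.card = ∑ w : V, (bad.filter (fun a => a.2 = w)).card :=
        Finset.card_eq_sum_card_fiberwise (fun a _ => Finset.mem_univ a.2)
      have : bad.card ≤ n * k := by
        rw [hcount]
        calc ∑ w : V, (bad.filter (fun a => a.2 = w)).card ≤ ∑ _w : V, k :=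
              Finset.sum_le_sum fun w _ => hfiber_card w
          _ = n * k := by rw [Finset.sum_const, Finset.card_univ, hcard, smul_eq_mul]
      exact_mod_cast this
    have hcards : Arcs.card = good.card + bad.card := by
      rw [hgood, hbad, add_comm]
      exact (Finset.card_filter_add_card_filter_not _).symm
    have hfinal : 2 * (Arcs.card : ℤ) ≤ (n : ℤ) * (k * k + 3 * k) := by
      have hc : (Arcs.card : ℤ) = (good.card : ℤ) + (bad.card : ℤ) := by exact_mod_cast hcards
      have h2S : 2 * (good.card : ℤ) ≤ 2 * S := by linarith
      linarith [hSbound, hbadcard]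
    -- move to the reals
    have hnR : (0 : ℝ) < (n : ℝ) := by
      have : 0 < n := hcard ▸ Fintype.card_pos
      exact_mod_cast this
    have hfinalR : 2 * ((Arcs.card : ℝ)) ≤ (n : ℝ) * ((k : ℝ) * k + 3 * k) := by
      exact_mod_cast hfinal
    rw [hm] at hfinalR
    have hdb : 2 * d ≤ (k : ℝ) * k + 3 * k := by
      have := hfinalR
      rw [show (2 : ℝ) * ((n : ℝ) * d) = (n : ℝ) * (2 * d) by ring] at this
      exact le_of_mul_le_mul_left this hnR
    have hsq : 2 * d ≤ ((k : ℝ) + 3 / 2) ^ 2 := by nlinarith [hdb]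
    calc Real.sqrt (2 * d) ≤ Real.sqrt (((k : ℝ) + 3 / 2) ^ 2) := Real.sqrt_le_sqrt hsq
      _ = (k : ℝ) + 3 / 2 := Real.sqrt_sq (by positivity)
  push_cast
  linarith
end

section
/- Let D be a digraph, F an out-branching of D, and uv an arc of D that is not a back arc of F, where u is at level i, v is at level j, and i ≥ j. Then the digraph F' obtained from F by adding the arc uv and deleting the arc of F whose head is v is again an out-branching of D, and moreover the level of v in F' (namely i+1) is strictly greater than its level j in F. -/
/-- `F` is an out-branching of the digraph with arc relation `A`, rooted at `root`:
a spanning out-tree, i.e. every arc of `F` is an arc of `A`, every vertex is reachable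
from `root` by a directed path of `F`, no arc of `F` enters `root`, and every vertex
has at most one in-neighbour in `F` (so every vertex except `root` has in-degree
exactly 1, and `F` is an oriented tree). -/
structure IsOutBranching {V : Type*} (A : V → V → Prop) (root : V)
    (F : V → V → Prop) : Prop where
  subrel : ∀ ⦃u v⦄, F u v → A u v
  reach : ∀ v : V, Relation.ReflTransGen F root v
  not_into_root : ∀ u : V, ¬ F u root
  parent_unique : ∀ ⦃u u' v⦄, F u v → F u' v → u = u'

/-- `lvl` is the level function of the out-branching `F` rooted at `root`:
`lvl u = i` iff the unique directed path in `F` from `root` to `u` has length `i`. -/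
def IsLevelMap {V : Type*} (F : V → V → Prop) (root : V) (lvl : V → ℕ) : Prop :=
  lvl root = 0 ∧ ∀ ⦃u v⦄, F u v → lvl v = lvl u + 1

/-- The arc `uv` is a back arc with respect to the out-branching `F` with level
function `lvl`: `u` lies at a strictly higher level than `v` and there is a
(nontrivial) directed path in `F` from `v` to `u`, i.e. `v` is an ancestor of `u`. -/
def IsBackArc {V : Type*} (F : V → V → Prop) (lvl : V → ℕ) (u v : V) : Prop :=
  lvl v < lvl u ∧ Relation.TransGen F v u

/-- The elementary operation: if `F` is an out-branching of the digraph `A` rooted at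
`root` with level function `lvl`, and `uv` is an arc of `A` that is not a back arc,
with `u` at level `i` and `v` at level `j` where `i ≥ j`, then the digraph `F'`
obtained from `F` by adding the arc `uv` and deleting the arc of `F` with head `v`
is again an out-branching of `A`, and the level of `v` in `F'` (namely `i + 1`) is
strictly greater than its level `j` in `F`. -/
theorem elementary_operation_out_branching
    {V : Type*} (A : V → V → Prop) (root : V) (F : V → V → Prop) (lvl : V → ℕ)
    (u v : V)
    (hloopless : ∀ x : V, ¬ A x x)
    (hF : IsOutBranching A root F)
    (hlvl : IsLevelMap F root lvl)
    (huv : A u v)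
    (hnotback : ¬ IsBackArc F lvl u v)
    (hle : lvl v ≤ lvl u) :
    IsOutBranching A root (fun x y => (x = u ∧ y = v) ∨ (F x y ∧ y ≠ v)) ∧
    ∀ lvl' : V → ℕ,
      IsLevelMap (fun x y => (x = u ∧ y = v) ∨ (F x y ∧ y ≠ v)) root lvl' →
        lvl' v = lvl u + 1 ∧ lvl v < lvl' v := by
  obtain ⟨hsub, hreach, hroot, hpar⟩ := hF
  obtain ⟨hl0, hls⟩ := hlvl
  have hlt : ∀ a b, Relation.TransGen F a b → lvl a < lvl b := by
    intro a b h
    induction h with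
    | single h => simp [hls h]
    | tail _ hab ih => exact lt_trans ih (by simp [hls hab])
  have huvne : u ≠ v := fun h => hloopless v (h ▸ huv)
  have hvu : ¬ Relation.ReflTransGen F v u := by
    intro h
    rcases (Relation.reflTransGen_iff_eq_or_transGen.mp h) with h | h
    · exact huvne h
    · exact hnotback ⟨hlt v u h, h⟩
  have hvroot : v ≠ root := by
    intro h
    subst h
    exact hvu (hreach u)
  -- key lemma: vertices not below v keep their paths / levels
  have key : ∀ w, Relation.ReflTransGen F root w → ¬ Relation.ReflTransGen F v w →
      Relation.ReflTransGen (fun x y => (x = u ∧ y = v) ∨ (F x y ∧ y ≠ v)) root w := by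
    intro w h
    induction h with
    | refl => intro _; exact Relation.ReflTransGen.refl
    | @tail b c _ hbc ih =>
      intro hnv
      have hnb : ¬ Relation.ReflTransGen F v b := fun h => hnv (h.tail hbc)
      have hcv : c ≠ v := fun h => hnv (h ▸ Relation.ReflTransGen.refl)
      exact (ih hnb).tail (Or.inr ⟨hbc, hcv⟩)
  have hrv : Relation.ReflTransGen (fun x y => (x = u ∧ y = v) ∨ (F x y ∧ y ≠ v)) root v :=
    (key u (hreach u) hvu).tail (Or.inl ⟨rfl, rfl⟩)
  have hreach' : ∀ w, Relation.ReflTransGen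
      (fun x y => (x = u ∧ y = v) ∨ (F x y ∧ y ≠ v)) root w := by
    intro w
    have h := hreach w
    induction h with
    | refl => exact Relation.ReflTransGen.refl
    | @tail b c _ hbc ih =>
      by_cases hc : c = v
      · exact hc ▸ hrv
      · exact ih.tail (Or.inr ⟨hbc, hc⟩)
  constructor
  · refine ⟨?_, hreach', ?_, ?_⟩
    · rintro x y (⟨rfl, rfl⟩ | ⟨h, _⟩)
      exacts [huv, hsub h]
    · rintro x (⟨-, rfl⟩ | ⟨h, -⟩)
      · exact hvroot rfl
      · exact hroot x h
    · rintro x x' y (⟨rfl, rfl⟩ | ⟨h, hy⟩) (⟨h1, h2⟩ | ⟨h', hy'⟩)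
      · exact h1.symm
      · exact absurd rfl hy'
      · exact absurd h2 hy
      · exact hpar h h'
  · intro lvl' ⟨hl0', hls'⟩
    have key2 : ∀ w, Relation.ReflTransGen F root w → ¬ Relation.ReflTransGen F v w →
        lvl' w = lvl w := by
      intro w h
      induction h with
      | refl => intro _; rw [hl0, hl0']
      | @tail b c _ hbc ih =>
        intro hnv
        have hnb : ¬ Relation.ReflTransGen F v b := fun h => hnv (h.tail hbc)
        have hcv : c ≠ v := fun h => hnv (h ▸ Relation.ReflTransGen.refl)
        rw [hls' (Or.inr ⟨hbc, hcv⟩), hls hbc, ih hnb]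
    have hu : lvl' u = lvl u := key2 u (hreach u) hvu
    have hv : lvl' v = lvl u + 1 := by
      rw [hls' (Or.inl ⟨rfl, rfl⟩), hu]
    exact ⟨hv, by omega⟩
end

section
/- Every strongly connected digraph D (with at least one vertex) has a final out-branching, i.e. an out-branching F such that every arc uv of D for which the level of u in F is greater than or equal to the level of v is a back arc of F. -/
namespace FinalOB

variable {V : Type*}

/-- The tree arc relation induced by a parent function. -/
def Fof (root : V) (p : V → V) : V → V → Prop := fun u v => v ≠ root ∧ p v = u

/-- Invariant for an out-branching given by a parent function and depth function. -/
structure Branch (A : V → V → Prop) (root : V) (p : V → V) (d : V → ℕ) : Prop where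
  d_root : d root = 0
  arc : ∀ v, v ≠ root → A (p v) v
  d_step : ∀ v, v ≠ root → d v = d (p v) + 1

variable {A : V → V → Prop} {root : V} {p : V → V} {d : V → ℕ}

lemma Branch.F_step (B : Branch A root p d) {a b : V} (h : Fof root p a b) :
    d b = d a + 1 := by
  obtain ⟨hb, rfl⟩ := h
  exact B.d_step b hb

lemma Branch.eq_root_of_d_eq_zero (B : Branch A root p d) {v} (h : d v = 0) : v = root := by
  by_contra hv
  have := B.d_step v hv
  omega

lemma Branch.reach (B : Branch A root p d) (v : V) :
    Relation.ReflTransGen (Fof root p) root v := by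
  suffices h : ∀ n v, d v ≤ n → Relation.ReflTransGen (Fof root p) root v from h (d v) v le_rfl
  intro n
  induction n with
  | zero =>
    intro v hv
    have := B.eq_root_of_d_eq_zero (Nat.le_zero.mp hv)
    subst this
    exact .refl
  | succ n ih =>
    intro v hv
    by_cases h : v = root
    · subst h; exact .refl
    · have := B.d_step v h
      exact (ih (p v) (by omega)).tail ⟨h, rfl⟩

lemma Branch.transGen_d_lt (B : Branch A root p d) {a b : V}
    (h : Relation.TransGen (Fof root p) a b) : d a < d b := by
  induction h with
  | single h => have := B.F_step h; omega
  | tail _ h ih => have := B.F_step h; omega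

lemma Branch.root_trans (B : Branch A root p d) {u : V} (hu : u ≠ root) :
    Relation.TransGen (Fof root p) root u :=
  Relation.TransGen.tail' (B.reach (p u)) ⟨hu, rfl⟩

lemma Branch.d_iterate (B : Branch A root p d) (v : V) :
    ∀ i, i ≤ d v → d (p^[i] v) = d v - i := by
  intro i
  induction i with
  | zero => simp
  | succ i ih =>
    intro h
    have h1 := ih (by omega)
    have hne : p^[i] v ≠ root := by
      intro he
      rw [he, B.d_root] at h1
      omega
    have h2 := B.d_step _ hne
    rw [Function.iterate_succ_apply']
    omega

lemma Branch.d_lt_card [Fintype V] (B : Branch A root p d) (v : V) :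
    d v < Fintype.card V := by
  have hinj : Function.Injective (fun i : Fin (d v + 1) => p^[(i : ℕ)] v) := by
    intro i j hij
    dsimp at hij
    have hi := B.d_iterate v i (Nat.lt_succ_iff.mp i.isLt)
    have hj := B.d_iterate v j (Nat.lt_succ_iff.mp j.isLt)
    have hij2 : (i : ℕ) ≤ d v := Nat.lt_succ_iff.mp i.isLt
    have hij3 : (j : ℕ) ≤ d v := Nat.lt_succ_iff.mp j.isLt
    rw [hij] at hi
    exact Fin.ext (by omega)
  have := Fintype.card_le_of_injective _ hinj
  simpa using this

/-- Existence of an initial out-branching (BFS tree). -/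
lemma exists_branch (A : V → V → Prop) (root : V)
    (h : ∀ v, Relation.ReflTransGen A root v) :
    ∃ p d, Branch A root p d := by
  classical
  have hex : ∀ v, ∃ n, Nat.rec (motive := fun _ => V → Prop) (fun b => b = root)
      (fun _ R b => ∃ c, R c ∧ A c b) n v := by
    intro v
    induction h v with
    | refl => exact ⟨0, rfl⟩
    | tail _ hbc ih =>
      obtain ⟨n, hn⟩ := ih
      exact ⟨n + 1, _, hn, hbc⟩
  set steps : ℕ → V → Prop := fun n => Nat.rec (motive := fun _ => V → Prop)
      (fun b => b = root) (fun _ R b => ∃ c, R c ∧ A c b) n with hsteps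
  set d : V → ℕ := fun v => Nat.find (hex v) with hd
  have hspec : ∀ v, steps (d v) v := fun v => Nat.find_spec (hex v)
  have hmin : ∀ v n, steps n v → d v ≤ n := fun v n hn => Nat.find_min' (hex v) hn
  have hroot : d root = 0 := Nat.le_zero.mp (hmin root 0 rfl)
  have key : ∀ v, ∃ c, v ≠ root → A c v ∧ d v = d c + 1 := by
    intro v
    by_cases hv : v = root
    · exact ⟨root, fun hn => absurd hv hn⟩
    · have hdv : d v ≠ 0 := by
        intro h0
        have := hspec v
        rw [h0] at this
        exact hv this
      obtain ⟨m, hm⟩ : ∃ m, d v = m + 1 := ⟨d v - 1, by omega⟩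
      have hsv := hspec v
      rw [hm] at hsv
      obtain ⟨c, hc, hAc⟩ := hsv
      refine ⟨c, fun _ => ⟨hAc, ?_⟩⟩
      have h1 : d c ≤ m := hmin c m hc
      have h2 : d v ≤ d c + 1 := hmin v _ ⟨c, hspec c, hAc⟩
      omega
  choose p hp using key
  exact ⟨p, d, hroot, fun v hv => (hp v hv).1, fun v hv => (hp v hv).2⟩

/-- One elementary operation. -/
lemma Branch.improve (B : Branch A root p d)
    (hloopless : ∀ w : V, ¬ A w w)
    {u v : V} (hA : A u v) (hle : d v ≤ d u)
    (hnb : ¬ (d v < d u ∧ Relation.TransGen (Fof root p) v u)) :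
    ∃ p' d', Branch A root p' d' ∧ (∀ w, d w ≤ d' w) ∧ d v < d' v := by
  classical
  have huv : u ≠ v := fun h => hloopless v (h ▸ hA)
  have hvroot : v ≠ root := by
    intro hveq
    have hur : u ≠ root := by
      intro h
      rw [hveq] at hA
      rw [h] at hA
      exact hloopless root hA
    have h1 : d u ≠ 0 := fun h0 => hur (B.eq_root_of_d_eq_zero h0)
    have h3 : d v = 0 := by rw [hveq, B.d_root]
    refine hnb ⟨by omega, ?_⟩
    rw [hveq]
    exact B.root_trans hur
  have hnt : ¬ Relation.TransGen (Fof root p) v u :=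
    fun ht => hnb ⟨B.transGen_d_lt ht, ht⟩
  set F := Fof root p with hF
  set S : V → Prop := fun w => Relation.ReflTransGen F v w with hSdef
  have hSv : S v := Relation.ReflTransGen.refl
  have hSu : ¬ S u := by
    intro h
    rcases Relation.ReflTransGen.cases_tail h with h | ⟨c, hc, hcu⟩
    · exact huv h
    · exact hnt (Relation.TransGen.tail' hc hcu)
  have hSroot : ¬ S root := by
    intro h
    rcases Relation.ReflTransGen.cases_tail h with h | ⟨c, _, hc⟩
    · exact hvroot h.symm
    · exact hc.1 rfl
  set δ := d u + 1 - d v with hδ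
  set p' := Function.update p v u with hp'
  set d' : V → ℕ := fun w => if S w then d w + δ else d w with hd'
  have hd'u : d' u = d u := if_neg hSu
  have hd'v : d' v = d u + 1 := by
    have : d' v = d v + δ := if_pos hSv
    omega
  have hmem : ∀ w, S w → w ≠ v → w ≠ root ∧ S (p w) := by
    intro w hw hwv
    rcases Relation.ReflTransGen.cases_tail hw with h | ⟨c, hc, hcw⟩
    · exact absurd h hwv
    · obtain ⟨hwr, hpw⟩ := hcw
      exact ⟨hwr, hpw ▸ hc⟩
  have hclose : ∀ w, w ≠ root → S (p w) → S w := fun w hw h => h.tail ⟨hw, rfl⟩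
  refine ⟨p', d', ⟨?_, ?_, ?_⟩, ?_, ?_⟩
  · -- d' root = 0
    have : d' root = d root := if_neg hSroot
    rw [this, B.d_root]
  · -- arcs
    intro w hw
    by_cases hwv : w = v
    · subst hwv
      rw [hp', Function.update_self]
      exact hA
    · rw [hp', Function.update_of_ne hwv]
      exact B.arc w hw
  · -- depth step
    intro w hw
    by_cases hwv : w = v
    · subst hwv
      rw [hp', Function.update_self, hd'v, hd'u]
    · rw [hp', Function.update_of_ne hwv]
      have hstep := B.d_step w hw
      by_cases hws : S w
      · obtain ⟨_, hpw⟩ := hmem w hws hwv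
        have e1 : d' w = d w + δ := if_pos hws
        have e2 : d' (p w) = d (p w) + δ := if_pos hpw
        omega
      · have hpw : ¬ S (p w) := fun h => hws (hclose w hw h)
        have e1 : d' w = d w := if_neg hws
        have e2 : d' (p w) = d (p w) := if_neg hpw
        omega
  · intro w
    by_cases hws : S w
    · have : d' w = d w + δ := if_pos hws
      omega
    · have : d' w = d w := if_neg hws
      omega
  · omega

/-- Main iteration. -/
lemma main [Fintype V] [Nonempty V] (A : V → V → Prop) (hloopless : ∀ w : V, ¬ A w w) (root : V) :
    ∀ (N : ℕ) (p : V → V) (d : V → ℕ), Branch A root p d →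
      Fintype.card V * Fintype.card V ≤ N + ∑ w, d w →
    ∃ (p : V → V) (d : V → ℕ), Branch A root p d ∧ ∀ u v, A u v → d v ≤ d u →
      d v < d u ∧ Relation.TransGen (Fof root p) v u := by
  intro N
  induction N with
  | zero =>
    intro p d B hN
    exfalso
    have h2 : ∑ w, d w ≤ Fintype.card V * (Fintype.card V - 1) := by
      calc ∑ w, d w ≤ ∑ _w : V, (Fintype.card V - 1) :=
            Finset.sum_le_sum fun w _ => by have := B.d_lt_card w; omega
        _ = Fintype.card V * (Fintype.card V - 1) := by
            simp [Finset.sum_const, mul_comm]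
    have hcpos : 0 < Fintype.card V := Fintype.card_pos
    have h3 : Fintype.card V * (Fintype.card V - 1) < Fintype.card V * Fintype.card V := by
      exact (Nat.mul_lt_mul_left hcpos).mpr (Nat.sub_lt hcpos Nat.one_pos)
    have h4 := le_trans (by simpa using hN) h2
    exact absurd h4 (not_le.mpr h3)
  | succ N ih =>
    intro p d B hN
    by_cases hfin : ∀ u v, A u v → d v ≤ d u →
        d v < d u ∧ Relation.TransGen (Fof root p) v u
    · exact ⟨p, d, B, hfin⟩
    · push_neg at hfin
      obtain ⟨u, v, hA, hle, hnb⟩ := hfin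
      have hnb' : ¬ (d v < d u ∧ Relation.TransGen (Fof root p) v u) := by
        intro ⟨h1, h2⟩
        exact (hnb h1) h2
      obtain ⟨p', d', B', hmono, hlt⟩ := B.improve hloopless hA hle hnb'
      apply ih p' d' B'
      have hsum : ∑ w, d w < ∑ w, d' w :=
        Finset.sum_lt_sum (fun w _ => hmono w) ⟨v, Finset.mem_univ v, hlt⟩
      linarith

end FinalOB




/-- Every (finite, nonempty) strongly connected digraph has a final out-branching:
an out-branching `F`, with root `root` and level function `lvl`, such that every arc
`uv` of the digraph for which the level of `u` is at least the level of `v` is a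
back arc of `F`. -/

theorem exists_final_out_branching
    {V : Type*} [Fintype V] [Nonempty V] (A : V → V → Prop)
    (hloopless : ∀ v : V, ¬ A v v)
    (hstrong : ∀ u v : V, Relation.ReflTransGen A u v) :
    ∃ (root : V) (F : V → V → Prop) (lvl : V → ℕ),
      IsOutBranching A root F ∧ IsLevelMap F root lvl ∧
      ∀ u v : V, A u v → lvl v ≤ lvl u → IsBackArc F lvl u v := by
  classical
  obtain ⟨root⟩ := (inferInstance : Nonempty V)
  obtain ⟨p0, d0, B0⟩ := FinalOB.exists_branch A root (hstrong root)
  obtain ⟨p, d, B, hfin⟩ := FinalOB.main A hloopless root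
    (Fintype.card V * Fintype.card V) p0 d0 B0 (Nat.le_add_right _ _)
  refine ⟨root, FinalOB.Fof root p, d, ⟨?_, B.reach, ?_, ?_⟩, ⟨B.d_root, fun u v h => B.F_step h⟩, ?_⟩
  · intro u v h
    rw [← h.2]
    exact B.arc v h.1
  · exact fun u h => h.1 rfl
  · exact fun u u' v h h' => h.2.symm.trans h'.2
  · exact fun u v h hle => hfin u v h hle
end

section
/- Let D be an n-vertex Eulerian digraph whose longest directed cycle has length t, and let F be a final out-branching of D rooted at v₀. Call an arc of D a forward arc if it goes from a lower level of F to a strictly upper level (in particular, every arc of F is a forward arc). Then the number of forward arcs of D is at most n·t(t+1)/2. -/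
/-- `l` is a directed cycle of the digraph with arc relation `A`:
its vertices are pairwise distinct, consecutive vertices are joined by arcs,
and there is an arc from the last vertex back to the first.  The length of
the cycle (its number of arcs) is `l.length`. -/
def IsDirCycle {V : Type*} (A : V → V → Prop) (l : List V) : Prop :=
  l ≠ [] ∧ l.Nodup ∧ (l ++ l.take 1).Chain' A

/-- Let `A` be an `n`-vertex Eulerian digraph (loopless, strongly connected, out-degree
equals in-degree at every vertex) whose longest directed cycle has length `t`, and let
`F` be a final out-branching of `A` rooted at `root` with level function `lvl`.  The
forward arcs are the arcs going from a lower level to a strictly upper level (in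
particular every arc of `F` is a forward arc).  Then the number of forward arcs of `A`
is at most `n * t * (t + 1) / 2`. -/
theorem forward_arcs_at_most
    {V : Type*} [Fintype V] (A : V → V → Prop) (n t : ℕ)
    (root : V) (F : V → V → Prop) (lvl : V → ℕ)
    (hcard : Fintype.card V = n)
    (hloopless : ∀ v : V, ¬ A v v)
    (hstrong : ∀ u v : V, Relation.ReflTransGen A u v)
    (heulerian : ∀ v : V, {w | A v w}.ncard = {w | A w v}.ncard)
    (hlongest_le : ∀ l : List V, IsDirCycle A l → l.length ≤ t)
    (hlongest_ex : ∃ l : List V, IsDirCycle A l ∧ l.length = t)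
    (hF : IsOutBranching A root F)
    (hlvl : IsLevelMap F root lvl)
    (hfinal : ∀ u v : V, A u v → lvl v ≤ lvl u → IsBackArc F lvl u v) :
    ({p : V × V | A p.1 p.2 ∧ lvl p.1 < lvl p.2}.ncard : ℝ)
      ≤ n * t * (t + 1) / 2 := by
  
  classical
  obtain ⟨hroot0, hstep⟩ := hlvl
  -- level is monotone along F-paths
  have hmono : ∀ {a b : V}, Relation.ReflTransGen F a b → lvl a ≤ lvl b := by
    intro a b h
    induction h with
    | refl => exact le_rfl
    | tail _ h2 ih => rw [hstep h2]; omega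
  -- a path with equal levels must be trivial
  have heqlvl : ∀ {a b : V}, Relation.ReflTransGen F a b → lvl a = lvl b → a = b := by
    intro a b h he
    rcases Relation.ReflTransGen.cases_tail h with rfl | ⟨w, hvw, hwu⟩
    · rfl
    · have h1 := hmono hvw
      have h2 := hstep hwu
      omega
  -- uniqueness of the ancestor at a given level
  have hanc : ∀ N u v v', lvl u = N → Relation.ReflTransGen F v u →
      Relation.ReflTransGen F v' u → lvl v = lvl v' → v = v' := by
    intro N
    induction N using Nat.strong_induction_on with
    | _ N ih =>
      intro u v v' hN h1 h2 he
      rcases Relation.ReflTransGen.cases_tail h1 with rfl | ⟨w, hvw, hwu⟩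
      · exact (heqlvl h2 he.symm).symm
      rcases Relation.ReflTransGen.cases_tail h2 with rfl | ⟨w', hv'w, hw'u⟩
      · exact heqlvl h1 he
      have hww : w = w' := hF.parent_unique hwu hw'u
      subst hww
      have hwlt : lvl w < N := by have := hstep hwu; omega
      exact ih (lvl w) hwlt w v v' rfl hvw hv'w he
  -- length of a chain in F
  have hlen : ∀ (l : List V) (a : V), List.Chain F a l →
      lvl ((a :: l).getLast (List.cons_ne_nil a l)) = lvl a + l.length := by
    intro l
    induction l with
    | nil => intro a _; simp
    | cons b l ih =>
      intro a hc
      change List.IsChain F (a :: b :: l) at hc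
      rw [List.chain_cons] at hc
      have h := ih b hc.2
      rw [List.getLast_cons (List.cons_ne_nil b l), h, hstep hc.1, List.length_cons]
      omega
  -- non-forward arcs are short back arcs
  have hback : ∀ u v, A u v → lvl v ≤ lvl u →
      Relation.TransGen F v u ∧ lvl v < lvl u ∧ lvl u < lvl v + t := by
    intro u v hA hle
    obtain ⟨hlt, htg⟩ := hfinal u v hA hle
    refine ⟨htg, hlt, ?_⟩
    obtain ⟨l, hchain, hlast⟩ := List.exists_isChain_cons_of_relationReflTransGen htg.to_reflTransGen
    have hlvlu : lvl u = lvl v + l.length := by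
      have := hlen l v hchain
      rw [hlast] at this
      exact this
    have hltchain : List.Chain (fun x y => lvl x < lvl y) v l :=
      hchain.imp (fun x y h => by rw [hstep h]; omega)
    haveI : IsTrans V (fun x y => lvl x < lvl y) := ⟨fun a b c => Nat.lt_trans⟩
    have hpw : (v :: l).Pairwise (fun x y => lvl x < lvl y) := by
      rw [← List.isChain_iff_pairwise]
      exact hltchain
    have hnodup : (v :: l).Nodup :=
      hpw.imp (fun h => ne_of_apply_ne lvl (Nat.ne_of_lt h))
    have hcyc : IsDirCycle A (v :: l) := by
      refine ⟨List.cons_ne_nil _ _, hnodup, ?_⟩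
      have htake : (v :: l).take 1 = [v] := by simp
      rw [htake]
      change List.IsChain A (v :: l ++ [v])
      rw [List.isChain_append]
      refine ⟨hchain.imp (fun x y h => hF.subrel h), List.isChain_singleton v, ?_⟩
      intro x hx y hy
      rw [List.getLast?_eq_getLast (List.cons_ne_nil v l), hlast] at hx
      simp only [Option.mem_def, Option.some.injEq] at hx
      simp only [List.head?_cons, Option.mem_def, Option.some.injEq] at hy
      subst hx; subst hy
      exact hA
    have hle_t := hlongest_le (v :: l) hcyc
    simp only [List.length_cons] at hle_t
    omega
  set arcs : Finset (V × V) := Finset.univ.filter (fun p => A p.1 p.2) with harcs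
  set Fwd : Finset (V × V) :=
    Finset.univ.filter (fun p => A p.1 p.2 ∧ lvl p.1 < lvl p.2) with hFwd
  set Bwd : Finset (V × V) :=
    Finset.univ.filter (fun p => A p.1 p.2 ∧ lvl p.2 ≤ lvl p.1) with hBwd
  -- the set in the statement
  have hncard : {p : V × V | A p.1 p.2 ∧ lvl p.1 < lvl p.2}.ncard = Fwd.card := by
    rw [Set.ncard_eq_toFinset_card']
    congr 1
    ext p
    simp [hFwd]
  -- degree equality as finsets
  have hdeg : ∀ v : V, (Finset.univ.filter (fun u => A u v)).card
      = (Finset.univ.filter (fun w => A v w)).card := by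
    intro v
    have h := heulerian v
    rw [Set.ncard_eq_toFinset_card', Set.ncard_eq_toFinset_card'] at h
    simp only [Set.toFinset_setOf] at h
    exact h.symm
  -- the zero-sum identity
  have hzero : ∑ p ∈ arcs, ((lvl p.2 : ℝ) - lvl p.1) = 0 := by
    rw [Finset.sum_sub_distrib, sub_eq_zero, harcs,
      Finset.sum_filter, Finset.sum_filter, ← Finset.univ_product_univ,
      Finset.sum_product, Finset.sum_product]
    rw [Finset.sum_comm]
    apply Finset.sum_congr rfl
    intro v _
    rw [show (fun u => if A u v then (lvl (u, v).2 : ℝ) else 0)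
        = fun u => if A u v then (lvl v : ℝ) else 0 from rfl]
    rw [← Finset.sum_filter (fun u => A u v) (fun _ => (lvl v : ℝ)),
        ← Finset.sum_filter (fun w => A v w) (fun _ => (lvl v : ℝ)),
        Finset.sum_const, Finset.sum_const, hdeg v]
  -- splitting
  have hsplit : ∑ p ∈ Fwd, ((lvl p.2 : ℝ) - lvl p.1)
      + ∑ p ∈ Bwd, ((lvl p.2 : ℝ) - lvl p.1) = 0 := by
    rw [← hzero]
    have e1 : Fwd = arcs.filter (fun p => lvl p.1 < lvl p.2) := by
      rw [harcs, hFwd, Finset.filter_filter]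
    have e2 : Bwd = arcs.filter (fun p => ¬ lvl p.1 < lvl p.2) := by
      rw [harcs, hBwd, Finset.filter_filter]
      apply Finset.filter_congr
      intro p _
      simp [not_lt]
    rw [e1, e2]
    exact Finset.sum_filter_add_sum_filter_not _ _ _
  -- forward arcs each contribute at least 1
  have hFlow : (Fwd.card : ℝ) ≤ ∑ p ∈ Fwd, ((lvl p.2 : ℝ) - lvl p.1) := by
    have : (Fwd.card : ℝ) = ∑ _p ∈ Fwd, (1 : ℝ) := by simp
    rw [this]
    apply Finset.sum_le_sum
    intro p hp
    rw [hFwd, Finset.mem_filter] at hp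
    have h := hp.2.2
    have h' : (lvl p.1 : ℝ) + 1 ≤ (lvl p.2 : ℝ) := by exact_mod_cast h
    linarith
  -- per-vertex back-arc bound
  set Gn : ℕ := ∑ d ∈ Finset.Icc 1 (t - 1), d with hGn
  have hper : ∀ u : V, ∑ v ∈ Finset.univ.filter (fun v => A u v ∧ lvl v ≤ lvl u),
      (lvl u - lvl v) ≤ Gn := by
    intro u
    set Bu := Finset.univ.filter (fun v => A u v ∧ lvl v ≤ lvl u) with hBu
    have hinj : ∀ x ∈ Bu, ∀ y ∈ Bu, lvl u - lvl x = lvl u - lvl y → x = y := by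
      intro x hx y hy hxy
      rw [hBu, Finset.mem_filter] at hx hy
      obtain ⟨htx, hx2, _⟩ := hback u x hx.2.1 hx.2.2
      obtain ⟨hty, hy2, _⟩ := hback u y hy.2.1 hy.2.2
      have hxy' : lvl x = lvl y := by omega
      exact hanc (lvl u) u x y rfl htx.to_reflTransGen hty.to_reflTransGen hxy'
    have him : Bu.image (fun v => lvl u - lvl v) ⊆ Finset.Icc 1 (t - 1) := by
      intro d hd
      rw [Finset.mem_image] at hd
      obtain ⟨v, hv, rfl⟩ := hd
      rw [hBu, Finset.mem_filter] at hv
      obtain ⟨_, h2, h3⟩ := hback u v hv.2.1 hv.2.2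
      rw [Finset.mem_Icc]
      omega
    calc ∑ v ∈ Bu, (lvl u - lvl v)
        = ∑ d ∈ Bu.image (fun v => lvl u - lvl v), d :=
          (Finset.sum_image (f := fun d => d) hinj).symm
      _ ≤ Gn := Finset.sum_le_sum_of_subset him
  -- the backward sum bound
  have hBsum : ∑ p ∈ Bwd, ((lvl p.1 : ℝ) - lvl p.2) ≤ (n : ℝ) * Gn := by
    rw [hBwd, Finset.sum_filter, ← Finset.univ_product_univ, Finset.sum_product]
    have hstep2 : ∀ u : V, (∑ v : V, if A u v ∧ lvl v ≤ lvl u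
        then ((lvl u : ℝ) - lvl v) else 0) ≤ (Gn : ℝ) := by
      intro u
      rw [← Finset.sum_filter]
      have hc : ∑ v ∈ Finset.univ.filter (fun v => A u v ∧ lvl v ≤ lvl u),
          ((lvl u : ℝ) - lvl v)
          = ((∑ v ∈ Finset.univ.filter (fun v => A u v ∧ lvl v ≤ lvl u),
              (lvl u - lvl v) : ℕ) : ℝ) := by
        rw [Nat.cast_sum]
        apply Finset.sum_congr rfl
        intro v hv
        rw [Finset.mem_filter] at hv
        rw [Nat.cast_sub hv.2.2]
      rw [hc]
      exact_mod_cast hper u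
    calc ∑ u : V, ∑ v : V, (if A (u, v).1 (u, v).2 ∧ lvl (u, v).2 ≤ lvl (u, v).1
          then ((lvl (u, v).1 : ℝ) - lvl (u, v).2) else 0)
        ≤ ∑ _u : V, (Gn : ℝ) := Finset.sum_le_sum (fun u _ => hstep2 u)
      _ = (n : ℝ) * Gn := by
          rw [Finset.sum_const, Finset.card_univ, hcard, nsmul_eq_mul]
  -- Gauss bound
  have hG : 2 * Gn ≤ t * (t + 1) := by
    have h1 : Gn ≤ ∑ d ∈ Finset.range t, d := by
      apply Finset.sum_le_sum_of_subset
      intro d hd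
      rw [Finset.mem_Icc] at hd
      rw [Finset.mem_range]
      omega
    have h2 : (∑ i ∈ Finset.range t, i) * 2 = t * (t - 1) :=
      Finset.sum_range_id_mul_two t
    have h3 : t * (t - 1) ≤ t * (t + 1) := Nat.mul_le_mul_left t (by omega)
    calc 2 * Gn ≤ 2 * ∑ d ∈ Finset.range t, d := by omega
      _ = t * (t - 1) := by rw [← h2]; ring
      _ ≤ t * (t + 1) := h3
  -- combine
  have hBneg : ∑ p ∈ Bwd, ((lvl p.2 : ℝ) - lvl p.1)
      = - ∑ p ∈ Bwd, ((lvl p.1 : ℝ) - lvl p.2) := by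
    rw [← Finset.sum_neg_distrib]
    apply Finset.sum_congr rfl
    intro p _
    ring
  have hmain : (Fwd.card : ℝ) ≤ (n : ℝ) * Gn := by
    rw [hBneg] at hsplit
    linarith
  have hGr : (Gn : ℝ) ≤ (t : ℝ) * (t + 1) / 2 := by
    have : ((2 * Gn : ℕ) : ℝ) ≤ ((t * (t + 1) : ℕ) : ℝ) := by exact_mod_cast hG
    push_cast at this
    linarith
  rw [hncard]
  have hn0 : (0 : ℝ) ≤ (n : ℝ) := Nat.cast_nonneg n
  calc (Fwd.card : ℝ) ≤ (n : ℝ) * Gn := hmain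
    _ ≤ (n : ℝ) * ((t : ℝ) * (t + 1) / 2) := mul_le_mul_of_nonneg_left hGr hn0
    _ = (n : ℝ) * t * (t + 1) / 2 := by ring
end

section
/- Let D be an n-vertex Eulerian digraph whose longest directed cycle has length t, let F be a final out-branching of D, let Lᵢ denote the set of vertices at level i of F and L_{≤i} = L₀ ∪ ⋯ ∪ Lᵢ. Then for every i ≥ 0, the number of arcs of D leaving L_{≤i} satisfies d⁺(L_{≤i}) = d⁻(L_{≤i}) ≤ Σ_{j=1}^{t} (t+1−j)·|L_{i+j}|. -/
section Aux

variable {V : Type*} {F : V → V → Prop} {lvl : V → ℕ}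

/-- Levels are monotone along paths of `F`, strictly so for nontrivial paths. -/
lemma aux_lvl_le_of_rtg (hstep : ∀ ⦃u v⦄, F u v → lvl v = lvl u + 1)
    {a b : V} (h : Relation.ReflTransGen F a b) :
    lvl a ≤ lvl b ∧ (lvl a = lvl b → a = b) := by
  induction h with
  | refl => exact ⟨le_rfl, fun _ => rfl⟩
  | tail h' hs ih =>
    have hstep' := hstep hs
    exact ⟨by omega, fun h => absurd h (by omega)⟩

/-- Uniqueness of ancestors at a given level. -/
lemma aux_anc_unique (hstep : ∀ ⦃u v⦄, F u v → lvl v = lvl u + 1)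
    (hpu : ∀ ⦃u u' v⦄, F u v → F u' v → u = u') :
    ∀ n (u : V), lvl u ≤ n → ∀ a b, Relation.ReflTransGen F a u →
      Relation.ReflTransGen F b u → lvl a = lvl b → a = b := by
  intro n
  induction n with
  | zero =>
    intro u hu a b ha hb hab
    have h1 := aux_lvl_le_of_rtg hstep ha
    have h2 := aux_lvl_le_of_rtg hstep hb
    have ha' : a = u := h1.2 (by omega)
    have hb' : b = u := h2.2 (by omega)
    rw [ha', hb']
  | succ n ih =>
    intro u hu a b ha hb hab
    have h1 := aux_lvl_le_of_rtg hstep ha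
    have h2 := aux_lvl_le_of_rtg hstep hb
    by_cases hau : lvl a = lvl u
    · have ha' : a = u := h1.2 hau
      have hb' : b = u := h2.2 (by omega)
      rw [ha', hb']
    · rcases ha.cases_tail with rfl | ⟨c, hac, hcu⟩
      · exact absurd rfl hau
      rcases hb.cases_tail with rfl | ⟨c', hbc, hcu'⟩
      · exact absurd hab (by omega)
      have hcc : c = c' := hpu hcu hcu'
      subst hcc
      have hc : lvl u = lvl c + 1 := hstep hcu'
      exact ih c (by omega) a b hac hbc hab

/-- From a nontrivial `F`-path we extract the corresponding list of vertices. -/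
lemma aux_path_of_tg (hstep : ∀ ⦃u v⦄, F u v → lvl v = lvl u + 1)
    {v u : V} (h : Relation.TransGen F v u) :
    ∃ l : List V, l ≠ [] ∧ l.Chain' F ∧ l.head? = some v ∧ l.getLast? = some u ∧
      l.length + lvl v = lvl u + 1 := by
  induction h with
  | single hf =>
    refine ⟨[v, _], by simp, List.isChain_pair.mpr hf, rfl, rfl, ?_⟩
    have := hstep hf
    simp only [List.length_cons, List.length_nil]
    omega
  | tail h hf ih =>
    obtain ⟨l, hne, hch, hhead, hlast, hlen⟩ := ih
    refine ⟨l ++ [_], by simp, ?_, ?_, List.getLast?_concat, ?_⟩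
    · show List.IsChain _ (_ ++ _); rw [List.isChain_append]
      refine ⟨hch, List.isChain_singleton _, fun x hx y hy => ?_⟩
      rw [hlast] at hx
      simp only [List.head?_cons, Option.mem_def, Option.some.injEq] at hx hy
      rw [← hx, ← hy]
      exact hf
    · rw [List.head?_append, hhead]
      rfl
    · have := hstep hf
      simp only [List.length_append, List.length_singleton]
      omega

end Aux

/-- Let `A` be an `n`-vertex Eulerian digraph whose longest directed cycle has length
`t`, let `F` be a final out-branching of `A` rooted at `root` with level function
`lvl`, let `Lᵢ = {v | lvl v = i}` and `L_{≤ i} = {v | lvl v ≤ i}`.  Then for every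
`i ≥ 0` we have `d⁺(L_{≤ i}) = d⁻(L_{≤ i}) ≤ ∑_{j=1}^{t} (t + 1 - j) * |L_{i+j}|`. -/
theorem cut_below_level_bound
    {V : Type*} [Fintype V] (A : V → V → Prop) (n t : ℕ)
    (root : V) (F : V → V → Prop) (lvl : V → ℕ)
    (hcard : Fintype.card V = n)
    (hloopless : ∀ v : V, ¬ A v v)
    (hstrong : ∀ u v : V, Relation.ReflTransGen A u v)
    (heulerian : ∀ v : V, {w | A v w}.ncard = {w | A w v}.ncard)
    (hlongest_le : ∀ l : List V, IsDirCycle A l → l.length ≤ t)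
    (hlongest_ex : ∃ l : List V, IsDirCycle A l ∧ l.length = t)
    (hF : IsOutBranching A root F)
    (hlvl : IsLevelMap F root lvl)
    (hfinal : ∀ u v : V, A u v → lvl v ≤ lvl u → IsBackArc F lvl u v)
    (i : ℕ) :
    {p : V × V | lvl p.1 ≤ i ∧ i < lvl p.2 ∧ A p.1 p.2}.ncard
        = {p : V × V | i < lvl p.1 ∧ lvl p.2 ≤ i ∧ A p.1 p.2}.ncard ∧
    {p : V × V | lvl p.1 ≤ i ∧ i < lvl p.2 ∧ A p.1 p.2}.ncard
        ≤ ∑ j ∈ Finset.Icc 1 t, (t + 1 - j) * {v : V | lvl v = i + j}.ncard := by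
  classical
  obtain ⟨hroot0, hstep⟩ := hlvl
  -- Bound coming from the longest-cycle hypothesis: every back arc closes a cycle.
  have back_bound : ∀ u v : V, A u v → Relation.TransGen F v u →
      lvl u + 1 ≤ t + lvl v := by
    intro u v harc htg
    obtain ⟨l, hne, hch, hhead, hlast, hlen⟩ := aux_path_of_tg hstep htg
    have hchlt : l.Chain' (fun a b => lvl a < lvl b) :=
      List.IsChain.imp (fun a b h => by have := hstep h; omega) hch
    haveI : IsTrans V (fun a b : V => lvl a < lvl b) :=
      ⟨fun a b c hab hbc => lt_trans hab hbc⟩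
    have hnd : l.Nodup := by
      have hpw : l.Pairwise (fun a b => lvl a < lvl b) :=
        List.isChain_iff_pairwise.mp hchlt
      exact hpw.imp (fun {a b} h => by intro he; rw [he] at h; exact lt_irrefl _ h)
    have htake : l.take 1 = [v] := by
      cases l with
      | nil => exact absurd rfl hne
      | cons a tl =>
        simp only [List.head?_cons, Option.some.injEq] at hhead
        rw [hhead]; rfl
    have hcyc : IsDirCycle A l := by
      refine ⟨hne, hnd, ?_⟩
      rw [htake]; show List.IsChain _ (_ ++ _); rw [List.isChain_append]
      refine ⟨List.IsChain.imp (fun a b h => hF.subrel h) hch,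
        List.isChain_singleton _, fun x hx y hy => ?_⟩
      rw [hlast] at hx
      simp only [List.head?_cons, Option.mem_def, Option.some.injEq] at hx hy
      rw [← hx, ← hy]
      exact harc
    have := hlongest_le l hcyc
    omega
  -- conversions between `ncard` and `Finset.card`
  have hncOut : {p : V × V | lvl p.1 ≤ i ∧ i < lvl p.2 ∧ A p.1 p.2}.ncard
      = (Finset.univ.filter (fun p : V × V => lvl p.1 ≤ i ∧ i < lvl p.2 ∧ A p.1 p.2)).card := by
    rw [Set.ncard_eq_toFinset_card', Set.toFinset_setOf]
  have hncIn : {p : V × V | i < lvl p.1 ∧ lvl p.2 ≤ i ∧ A p.1 p.2}.ncard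
      = (Finset.univ.filter (fun p : V × V => i < lvl p.1 ∧ lvl p.2 ≤ i ∧ A p.1 p.2)).card := by
    rw [Set.ncard_eq_toFinset_card', Set.toFinset_setOf]
  have hncLvl : ∀ j : ℕ, {v : V | lvl v = i + j}.ncard
      = (Finset.univ.filter (fun v : V => lvl v = i + j)).card := by
    intro j
    rw [Set.ncard_eq_toFinset_card', Set.toFinset_setOf]
  -- fiberwise counting over the first/second coordinate
  have hcOut : (Finset.univ.filter (fun p : V × V => lvl p.1 ≤ i ∧ i < lvl p.2 ∧ A p.1 p.2)).card
      = ∑ u : V, (Finset.univ.filter (fun v : V => lvl u ≤ i ∧ i < lvl v ∧ A u v)).card := by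
    rw [Finset.card_filter, Fintype.sum_prod_type]
    exact Finset.sum_congr rfl fun u _ => (Finset.card_filter _ _).symm
  have hcInSnd : (Finset.univ.filter (fun p : V × V => i < lvl p.1 ∧ lvl p.2 ≤ i ∧ A p.1 p.2)).card
      = ∑ v : V, (Finset.univ.filter (fun u : V => i < lvl u ∧ lvl v ≤ i ∧ A u v)).card := by
    rw [Finset.card_filter, Fintype.sum_prod_type, Finset.sum_comm]
    exact Finset.sum_congr rfl fun v _ => (Finset.card_filter _ _).symm
  have hcInFst : (Finset.univ.filter (fun p : V × V => i < lvl p.1 ∧ lvl p.2 ≤ i ∧ A p.1 p.2)).card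
      = ∑ u : V, (Finset.univ.filter (fun v : V => i < lvl u ∧ lvl v ≤ i ∧ A u v)).card := by
    rw [Finset.card_filter, Fintype.sum_prod_type]
    exact Finset.sum_congr rfl fun u _ => (Finset.card_filter _ _).symm
  have hcBoth : (∑ u : V, (Finset.univ.filter (fun v : V => lvl u ≤ i ∧ lvl v ≤ i ∧ A u v)).card)
      = ∑ v : V, (Finset.univ.filter (fun u : V => lvl u ≤ i ∧ lvl v ≤ i ∧ A u v)).card := by
    have h1 : (Finset.univ.filter (fun p : V × V => lvl p.1 ≤ i ∧ lvl p.2 ≤ i ∧ A p.1 p.2)).card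
        = ∑ u : V, (Finset.univ.filter (fun v : V => lvl u ≤ i ∧ lvl v ≤ i ∧ A u v)).card := by
      rw [Finset.card_filter, Fintype.sum_prod_type]
      exact Finset.sum_congr rfl fun u _ => (Finset.card_filter _ _).symm
    have h2 : (Finset.univ.filter (fun p : V × V => lvl p.1 ≤ i ∧ lvl p.2 ≤ i ∧ A p.1 p.2)).card
        = ∑ v : V, (Finset.univ.filter (fun u : V => lvl u ≤ i ∧ lvl v ≤ i ∧ A u v)).card := by
      rw [Finset.card_filter, Fintype.sum_prod_type, Finset.sum_comm]
      exact Finset.sum_congr rfl fun v _ => (Finset.card_filter _ _).symm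
    rw [← h1, h2]
  -- Part 1 : the cut has as many outgoing as incoming arcs (Eulerian condition)
  have part1 : {p : V × V | lvl p.1 ≤ i ∧ i < lvl p.2 ∧ A p.1 p.2}.ncard
      = {p : V × V | i < lvl p.1 ∧ lvl p.2 ≤ i ∧ A p.1 p.2}.ncard := by
    rw [hncOut, hncIn, hcOut, hcInSnd]
    have key : ∀ X Y B : ℕ, X + B = Y + B → X = Y := fun X Y B h => by omega
    apply key _ _ (∑ u : V, (Finset.univ.filter (fun v : V => lvl u ≤ i ∧ lvl v ≤ i ∧ A u v)).card)
    have lhs_eq : (∑ u : V, (Finset.univ.filter (fun v : V => lvl u ≤ i ∧ i < lvl v ∧ A u v)).card)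
        + ∑ u : V, (Finset.univ.filter (fun v : V => lvl u ≤ i ∧ lvl v ≤ i ∧ A u v)).card
        = ∑ u : V, (Finset.univ.filter (fun v : V => lvl u ≤ i ∧ A u v)).card := by
      rw [← Finset.sum_add_distrib]
      refine Finset.sum_congr rfl fun u _ => ?_
      simp only [Finset.card_filter, ← Finset.sum_add_distrib]
      refine Finset.sum_congr rfl fun v _ => ?_
      by_cases h1 : A u v <;> by_cases h2 : lvl u ≤ i <;> by_cases h3 : lvl v ≤ i <;>
        simp [← not_le, h1, h2, h3]
    have rhs_eq : (∑ v : V, (Finset.univ.filter (fun u : V => i < lvl u ∧ lvl v ≤ i ∧ A u v)).card)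
        + ∑ u : V, (Finset.univ.filter (fun v : V => lvl u ≤ i ∧ lvl v ≤ i ∧ A u v)).card
        = ∑ v : V, (Finset.univ.filter (fun u : V => lvl v ≤ i ∧ A u v)).card := by
      rw [hcBoth, ← Finset.sum_add_distrib]
      refine Finset.sum_congr rfl fun v _ => ?_
      simp only [Finset.card_filter, ← Finset.sum_add_distrib]
      refine Finset.sum_congr rfl fun u _ => ?_
      by_cases h1 : A u v <;> by_cases h2 : lvl v ≤ i <;> by_cases h3 : lvl u ≤ i <;>
        simp [← not_le, h1, h2, h3]
    rw [lhs_eq, rhs_eq]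
    -- now use the Eulerian condition pointwise
    refine Finset.sum_congr rfl fun w _ => ?_
    by_cases hw : lvl w ≤ i
    · simp only [hw, true_and]
      have heu := heulerian w
      have e1 : {x | A w x}.ncard = (Finset.univ.filter (fun x : V => A w x)).card := by
        rw [Set.ncard_eq_toFinset_card', Set.toFinset_setOf]
      have e2 : {x | A x w}.ncard = (Finset.univ.filter (fun x : V => A x w)).card := by
        rw [Set.ncard_eq_toFinset_card', Set.toFinset_setOf]
      rw [e1, e2] at heu
      exact heu
    · simp [hw]
  refine ⟨part1, ?_⟩
  rw [part1, hncIn, hcInFst]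
  -- per-vertex bound on the number of back arcs into the cut
  have fib_bound : ∀ u : V,
      (Finset.univ.filter (fun v : V => i < lvl u ∧ lvl v ≤ i ∧ A u v)).card
        ≤ if i < lvl u then t + 1 - (lvl u - i) else 0 := by
    intro u
    by_cases hiu : i < lvl u
    · have hsub : (Finset.univ.filter (fun v : V => i < lvl u ∧ lvl v ≤ i ∧ A u v)).card
          ≤ (Finset.Icc (lvl u + 1 - t) i).card := by
        apply Finset.card_le_card_of_injOn lvl
        · intro v hv
          simp only [Finset.coe_filter, Set.mem_setOf_eq, Finset.mem_filter, Finset.mem_univ, true_and] at hv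
          obtain ⟨-, hvle, harc⟩ := hv
          obtain ⟨hlt, htg⟩ := hfinal u v harc (by omega)
          have := back_bound u v harc htg
          rw [Finset.mem_coe, Finset.mem_Icc]
          omega
        · intro v hv v' hv' heq
          simp only [Finset.coe_filter, Set.mem_setOf_eq, Finset.mem_univ, true_and] at hv hv'
          obtain ⟨-, hvle, harc⟩ := hv
          obtain ⟨-, hvle', harc'⟩ := hv'
          obtain ⟨-, htg⟩ := hfinal u v harc (by omega)
          obtain ⟨-, htg'⟩ := hfinal u v' harc' (by omega)
          exact aux_anc_unique hstep hF.parent_unique (lvl u) u le_rfl v v'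
            htg.to_reflTransGen htg'.to_reflTransGen heq
      rw [Nat.card_Icc] at hsub
      refine le_trans hsub ?_
      rw [if_pos hiu]
      omega
    · have hempty : (Finset.univ.filter (fun v : V => i < lvl u ∧ lvl v ≤ i ∧ A u v)) = ∅ := by
        apply Finset.filter_false_of_mem
        intro v _
        tauto
      rw [hempty]
      simp
  refine le_trans (Finset.sum_le_sum fun u _ => fib_bound u) (le_of_eq ?_)
  calc ∑ u : V, (if i < lvl u then t + 1 - (lvl u - i) else 0)
      = ∑ u : V, ∑ j ∈ Finset.Icc 1 t, (if lvl u = i + j then t + 1 - j else 0) := by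
        refine Finset.sum_congr rfl fun u _ => ?_
        by_cases hiu : i < lvl u
        · by_cases hub : lvl u ≤ i + t
          · rw [Finset.sum_eq_single (lvl u - i)]
            · rw [if_pos hiu, if_pos (show lvl u = i + (lvl u - i) by omega)]
            · intro j hj hne
              rw [if_neg]
              intro h
              exact hne (by omega)
            · intro habs
              exact absurd (Finset.mem_Icc.mpr ⟨by omega, by omega⟩) habs
          · rw [Finset.sum_eq_zero, if_pos hiu]
            · omega
            · intro j hj
              rw [Finset.mem_Icc] at hj
              rw [if_neg]
              omega
        · rw [Finset.sum_eq_zero, if_neg hiu]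
          intro j hj
          rw [Finset.mem_Icc] at hj
          rw [if_neg]
          omega
    _ = ∑ j ∈ Finset.Icc 1 t, ∑ u : V, (if lvl u = i + j then t + 1 - j else 0) :=
        Finset.sum_comm
    _ = ∑ j ∈ Finset.Icc 1 t, (t + 1 - j) * {v : V | lvl v = i + j}.ncard := by
        refine Finset.sum_congr rfl fun j _ => ?_
        rw [hncLvl j, ← Finset.sum_filter, Finset.sum_const, smul_eq_mul, mul_comm]
end
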